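/- arXiv:2504.17957 — 2 statements merged into one kernel-verified Lean document; each statement's English description precedes it below -/
import Mathlib

section
/- Let R be an order in a number field K with conductor I. Let π ∈ R be a prime element of 𝓞_K such that the ideal π𝓞_K is relatively prime to I, and let α ∈ R be nonzero with α = β·π for some β ∈ 𝓞_K. Then β ∈ R. Moreover, if α = π_1⋯π_m = τ_1⋯τ_n with all π_i and τ_j irreducible in R and m < n, then β admits a factorization into m−1 irreducibles of R and also a factorization into n−1 irreducibles of R. -/
set_option synthInstance.maxHeartbeats 1000000
set_option maxHeartbeats 1000000

open NumberField

/-- The conductor of a subring `R` of the ring of integers `𝓞 K`: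
the set of `x ∈ 𝓞 K` such that `x • 𝓞 K ⊆ R`, as an ideal of `𝓞 K`. -/
noncomputable def conductorIdeal {K : Type*} [Field K] [NumberField K] (R : Subring (𝓞 K)) :
    Ideal (𝓞 K) where
  carrier := {x | ∀ y : 𝓞 K, x * y ∈ R}
  add_mem' := fun {a b} ha hb y => by
    simpa [add_mul] using R.add_mem (ha y) (hb y)
  zero_mem' := fun y => by simpa using R.zero_mem
  smul_mem' := fun c x hx y => by
    simpa [smul_eq_mul, mul_comm, mul_assoc, mul_left_comm] using hx (c * y)

/-- Key lemma: if `x * π ∈ R` then `x ∈ R`. -/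
lemma aux_key {K : Type*} [Field K] [NumberField K] (R : Subring (𝓞 K))
    (hR : Finite ((𝓞 K) ⧸ R.toAddSubgroup))
    (π : 𝓞 K) (hπR : π ∈ R)
    (hcop : Ideal.span {π} ⊔ conductorIdeal R = ⊤)
    (x : 𝓞 K) (hx : x * π ∈ R) : x ∈ R := by
  have h1 : (1 : 𝓞 K) ∈ Ideal.span {π} ⊔ conductorIdeal R := by
    rw [hcop]; trivial
  obtain ⟨a, ha, c, hc, hac⟩ := Submodule.mem_sup.mp h1
  obtain ⟨u, rfl⟩ := Ideal.mem_span_singleton.mp ha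
  -- T : multiplication by π on the quotient
  set T : ((𝓞 K) ⧸ R.toAddSubgroup) →+ ((𝓞 K) ⧸ R.toAddSubgroup) :=
    QuotientAddGroup.map R.toAddSubgroup R.toAddSubgroup (AddMonoidHom.mulLeft π)
      (fun y hy => by
        simpa [AddMonoidHom.mulLeft] using R.mul_mem hπR hy) with hT
  have hsurj : Function.Surjective ⇑T := by
    intro q
    refine QuotientAddGroup.induction_on q (fun y => ⟨QuotientAddGroup.mk (u * y), ?_⟩)
    rw [hT, QuotientAddGroup.map_mk]
    rw [QuotientAddGroup.eq]
    have : -(AddMonoidHom.mulLeft π (u * y)) + y = c * y := by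
      simp only [AddMonoidHom.coe_mulLeft]
      have : c = 1 - π * u := by linear_combination hac
      rw [this]; ring
    rw [this]
    exact hc y
  have hinj : Function.Injective ⇑T := (Finite.injective_iff_surjective).mpr hsurj
  have h0 : T (QuotientAddGroup.mk x) = T (QuotientAddGroup.mk 0) := by
    rw [hT, QuotientAddGroup.map_mk, QuotientAddGroup.map_mk]
    simp only [AddMonoidHom.coe_mulLeft, mul_zero]
    rw [QuotientAddGroup.eq]
    simpa [mul_comm] using R.neg_mem (by simpa [mul_comm] using hx)
  have := hinj h0
  rw [QuotientAddGroup.eq] at this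
  simpa using R.neg_mem this

lemma aux_prod_not_unit {K : Type*} [Field K] [NumberField K] {R : Subring (𝓞 K)}
    {n : ℕ} (hn : 0 < n) (t : Fin n → R) (ht : ∀ j, Irreducible (t j)) :
    ¬ IsUnit (∏ j, t j) := fun hu =>
  (ht ⟨0, hn⟩).not_isUnit
    (isUnit_of_dvd_unit (Finset.dvd_prod_of_mem _ (Finset.mem_univ _)) hu)

lemma aux_side {K : Type*} [Field K] [NumberField K] (R : Subring (𝓞 K))
    (hR : Finite ((𝓞 K) ⧸ R.toAddSubgroup))
    (π : R) (hπ : Prime (π : 𝓞 K))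
    (hcop : Ideal.span {(π : 𝓞 K)} ⊔ conductorIdeal R = ⊤)
    (β : 𝓞 K) {m : ℕ} (hm : 2 ≤ m) (p : Fin m → R) (hp : ∀ i, Irreducible (p i))
    (hfacp : ((∏ i, p i : R) : 𝓞 K) = β * (π : 𝓞 K)) :
    ∃ q : Fin (m - 1) → R, (∀ i, Irreducible (q i)) ∧ ((∏ i, q i : R) : 𝓞 K) = β := by
  obtain ⟨k, rfl⟩ : ∃ k, m = k + 2 := ⟨m - 2, by omega⟩
  show ∃ q : Fin (k + 1) → R, (∀ i, Irreducible (q i)) ∧ ((∏ i, q i : R) : 𝓞 K) = β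
  have hcoeprod : ((∏ i, p i : R) : 𝓞 K) = ∏ i, ((p i : 𝓞 K)) := by
    push_cast; rfl
  have hdvd : (π : 𝓞 K) ∣ ∏ i, ((p i : 𝓞 K)) := by
    rw [← hcoeprod, hfacp]; exact Dvd.intro_left β rfl
  obtain ⟨i₀, -, hdi⟩ := hπ.exists_mem_finset_dvd hdvd
  obtain ⟨γ, hγ⟩ := hdi
  have hγR : γ ∈ R := aux_key R hR (π : 𝓞 K) π.2 hcop γ (by rw [mul_comm, ← hγ]; exact (p i₀).2)
  set g : R := ⟨γ, hγR⟩ with hg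
  have hpg : p i₀ = π * g := Subtype.ext (by exact hγ)
  have hgu : IsUnit g := by
    rcases (hp i₀).isUnit_or_isUnit hpg with h | h
    · exact absurd (h.map R.subtype) hπ.not_isUnit
    · exact h
  -- split the product
  have hsplit : (∏ i, p i) = p i₀ * ∏ i : Fin (k + 1), p (i₀.succAbove i) :=
    Fin.prod_univ_succAbove p i₀
  -- compute β
  have hβ : β = γ * ∏ i : Fin (k + 1), ((p (i₀.succAbove i) : 𝓞 K)) := by
    have h1 : β * (π : 𝓞 K) = ((π : 𝓞 K) * γ) * ∏ i : Fin (k + 1), ((p (i₀.succAbove i) : 𝓞 K)) := by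
      rw [← hγ, ← hfacp, hsplit]; push_cast; rfl
    have h2 : (π : 𝓞 K) * β = (π : 𝓞 K) * (γ * ∏ i : Fin (k + 1), ((p (i₀.succAbove i) : 𝓞 K))) := by
      linear_combination h1
    exact mul_left_cancel₀ hπ.ne_zero h2
  -- build q by absorbing the unit g into the first remaining factor
  classical
  set f : Fin (k + 1) → R := fun i => p (i₀.succAbove i) with hf
  refine ⟨Function.update f 0 (g * f 0), ?_, ?_⟩
  · intro i
    rcases eq_or_ne i 0 with rfl | hi
    · rw [Function.update_self]
      exact (irreducible_isUnit_mul hgu).mpr (hp _)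
    · rw [Function.update_of_ne hi]
      exact hp _
  · have hprodq : (∏ i, Function.update f 0 (g * f 0) i) = g * ∏ i, f i := by
      rw [Finset.prod_update_of_mem (Finset.mem_univ 0)]
      rw [mul_assoc, ← Finset.prod_eq_mul_prod_sdiff_singleton_of_mem (Finset.mem_univ 0)]
    rw [hprodq, hβ]
    push_cast
    rfl

/-- If `π ∈ R` is a prime element of `𝓞 K` with `π𝓞_K` relatively prime to the conductor,
`α ∈ R` is nonzero, and `α = β·π` with `β ∈ 𝓞 K`, then `β ∈ R`; moreover any two irreducible
factorizations of `α` in `R` of lengths `m < n` yield irreducible factorizations of `β` in `R`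
of lengths `m - 1` and `n - 1`. -/
theorem stmt_7 {K : Type*} [Field K] [NumberField K] (R : Subring (𝓞 K))
    (hR : Finite ((𝓞 K) ⧸ R.toAddSubgroup))
    (π : R) (hπ : Prime (π : 𝓞 K))
    (hcop : Ideal.span {(π : 𝓞 K)} ⊔ conductorIdeal R = ⊤)
    (α : R) (hα : α ≠ 0) (β : 𝓞 K) (hfac : (α : 𝓞 K) = β * (π : 𝓞 K)) :
    β ∈ R ∧
    ∀ (m n : ℕ) (p : Fin m → R) (t : Fin n → R),
      (∀ i, Irreducible (p i)) → (∀ j, Irreducible (t j)) →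
      α = ∏ i, p i → α = ∏ j, t j → m < n →
      ∃ (q : Fin (m - 1) → R) (s : Fin (n - 1) → R),
        (∀ i, Irreducible (q i)) ∧ (∀ j, Irreducible (s j)) ∧
        ((∏ i, q i : R) : 𝓞 K) = β ∧ ((∏ j, s j : R) : 𝓞 K) = β := by
  constructor
  · exact aux_key R hR (π : 𝓞 K) π.2 hcop β (hfac ▸ α.2)
  intro m n p t hp ht hαp hαt hmn
  -- rule out m = 0 and m = 1
  have hm2 : 2 ≤ m := by
    by_contra hm
    interval_cases m
    · -- α = 1, but α is a product of n ≥ 1 irreducibles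
      have h1 : α = 1 := by simpa using hαp
      exact aux_prod_not_unit (by omega : 0 < n) t ht (by rw [← hαt, h1]; exact isUnit_one)
    · -- α irreducible, but α is a product of n ≥ 2 irreducibles
      obtain ⟨n', rfl⟩ : ∃ n', n = n' + 2 := ⟨n - 2, by omega⟩
      have h1 : α = p 0 := by simpa using hαp
      have h2 : p 0 = t 0 * ∏ i : Fin (n' + 1), t i.succ := by
        rw [← h1, hαt, Fin.prod_univ_succ]
      rcases (hp 0).isUnit_or_isUnit h2 with h | h
      · exact (ht 0).not_isUnit h
      · exact aux_prod_not_unit (Nat.succ_pos n') _ (fun i => ht i.succ) h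
  have hn2 : 2 ≤ n := by omega
  obtain ⟨q, hq, hqβ⟩ := aux_side R hR π hπ hcop β hm2 p hp (by rw [← hαp]; exact hfac)
  obtain ⟨s, hs, hsβ⟩ := aux_side R hR π hπ hcop β hn2 t ht (by rw [← hαt]; exact hfac)
  exact ⟨q, s, hq, hs, hqβ, hsβ⟩
end

section
/- Let R be an order in a number field K whose conductor P is a prime ideal of 𝓞_K, and suppose the class group Cl(𝓞_K) is trivial (𝓞_K is a principal ideal domain). Then the ideal class group Cl(R) is a cyclic group. -/
/-!
Let `I` be the conductor and `k = 𝓞 K ⧸ I`, a finite field. For `u ∈ kˣ` with lift `x`, the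
`R`-module `R x + I` is invertible (its inverse is `R y + I` for a lift `y` of `u⁻¹`), and
`u ↦ [R x + I]` is a homomorphism `kˣ → Cl(R)`. It is onto: as `𝓞 K` is a PID, every invertible
`J` is equivalent to one with `J 𝓞 K = 𝓞 K`. Such a `J` lies in `𝓞 K` and contains `I`, and since
`J J⁻¹ = R` its image in `k` is a line over the residue field `R ⧸ I`, so `J = R x + I`. Hence
`Cl(R)` is a quotient of the cyclic group `kˣ`.
-/

open NumberField

open scoped nonZeroDivisors

section ResidueLine

variable {B : Type*} [CommRing B] (A : Subring B) (I : Ideal B)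

/-- For a lift `x` of `u`, this is the `A`-module `A x + I`. -/
def residueLine (u : B ⧸ I) : Submodule A B :=
  (Submodule.span A {u}).comap (Ideal.Quotient.mkₐ A I).toLinearMap

variable {A I}

theorem mem_residueLine {u : B ⧸ I} {x : B} :
    x ∈ residueLine A I u ↔ ∃ a ∈ A, Ideal.Quotient.mk I a * u = Ideal.Quotient.mk I x := by
  simp only [residueLine, Submodule.mem_comap, Submodule.mem_span_singleton]
  exact ⟨fun ⟨a, h⟩ => ⟨a, a.2, h⟩, fun ⟨a, ha, h⟩ => ⟨⟨a, ha⟩, h⟩⟩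

theorem restrictScalars_le_residueLine (u : B ⧸ I) : I.restrictScalars A ≤ residueLine A I u :=
  fun x hx => mem_residueLine.2
    ⟨0, A.zero_mem, by rwa [map_zero, zero_mul, eq_comm, Ideal.Quotient.eq_zero_iff_mem]⟩

theorem residueLine_one (hI : (I : Set B) ⊆ A) : residueLine A I 1 = 1 := by
  ext x
  simp only [mem_residueLine, Submodule.mem_one, mul_one]
  constructor
  · rintro ⟨a, ha, hax⟩
    have hxa : x - a ∈ I := Ideal.Quotient.eq.1 hax.symm
    exact ⟨⟨x, by simpa using A.add_mem ha (hI hxa)⟩, rfl⟩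
  · rintro ⟨a, rfl⟩
    exact ⟨a, a.2, rfl⟩

theorem residueLine_mul_le (u v : B ⧸ I) :
    residueLine A I u * residueLine A I v ≤ residueLine A I (u * v) := by
  refine Submodule.mul_le.2 fun x hx y hy => ?_
  obtain ⟨a, ha, hax⟩ := mem_residueLine.1 hx
  obtain ⟨b, hb, hby⟩ := mem_residueLine.1 hy
  exact mem_residueLine.2 ⟨a * b, A.mul_mem ha hb, by rw [map_mul, map_mul, ← hax, ← hby]; ring⟩

theorem restrictScalars_le_mul {M N : Submodule A B} (hIM : I.restrictScalars A ≤ M)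
    (hIN : I.restrictScalars A ≤ N) {x y w : B} (hx : x ∈ M)
    (hxyw : Ideal.Quotient.mk I (x * y * w) = 1) : I.restrictScalars A ≤ M * N := by
  intro i hi
  have hxyw' : 1 - x * y * w ∈ I := Ideal.Quotient.eq.1 (by rw [map_one, hxyw])
  rw [show i = x * (y * w * i) + (1 - x * y * w) * i by ring]
  exact add_mem (Submodule.mul_mem_mul hx (hIN (I.mul_mem_left _ hi)))
    (Submodule.mul_mem_mul (hIM hxyw') (hIN hi))

theorem residueLine_mul (u v : (B ⧸ I)ˣ) :
    residueLine A I ↑(u * v) = residueLine A I u * residueLine A I v := by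
  obtain ⟨x, hx⟩ := Ideal.Quotient.mk_surjective (u : B ⧸ I)
  obtain ⟨y, hy⟩ := Ideal.Quotient.mk_surjective (v : B ⧸ I)
  obtain ⟨w, hw⟩ := Ideal.Quotient.mk_surjective (↑(u * v)⁻¹ : B ⧸ I)
  have hxM : x ∈ residueLine A I u := mem_residueLine.2 ⟨1, A.one_mem, by simp [hx]⟩
  have hyN : y ∈ residueLine A I v := mem_residueLine.2 ⟨1, A.one_mem, by simp [hy]⟩
  refine le_antisymm (fun z hz => ?_) (residueLine_mul_le _ _)
  obtain ⟨a, ha, haz⟩ := mem_residueLine.1 hz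
  have hIle : I.restrictScalars A ≤ residueLine A I u * residueLine A I v :=
    restrictScalars_le_mul (restrictScalars_le_residueLine _) (restrictScalars_le_residueLine _)
      hxM (y := y) (w := w) (by rw [map_mul, map_mul, hx, hy, hw, ← Units.val_mul, Units.mul_inv])
  rw [show z = (a * x) * y + (z - a * x * y) by ring]
  refine add_mem (Submodule.mul_mem_mul ?_ hyN) (hIle ?_)
  · exact (residueLine A I u).smul_mem ⟨a, ha⟩ hxM
  · exact Ideal.Quotient.eq.1 (by simp [← haz, hx, hy, mul_assoc])

def residueLineHom (hI : (I : Set B) ⊆ A) : (B ⧸ I)ˣ →* (Submodule A B)ˣ :=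
  MonoidHom.toHomUnits
    { toFun := fun u => residueLine A I u
      map_one' := residueLine_one hI
      map_mul' := residueLine_mul }

theorem restrictScalars_le_of_span_eq_top (hI : (I : Set B) ⊆ A) {M : Submodule A B}
    (hM : Ideal.span (M : Set B) = ⊤) : I.restrictScalars A ≤ M := by
  have mul_mem : ∀ t ∈ Ideal.span (M : Set B), ∀ i ∈ I, i * t ∈ M := by
    intro t ht
    induction ht using Submodule.span_induction with
    | mem x hx => exact fun i hi => M.smul_mem ⟨i, hI hi⟩ hx
    | zero => simp
    | add x y _ _ hx hy => exact fun i hi => by rw [mul_add]; exact add_mem (hx i hi) (hy i hi)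
    | smul b x _ hx =>
      exact fun i hi => by rw [smul_eq_mul, ← mul_assoc]; exact hx _ (I.mul_mem_right b hi)
  intro i hi
  simpa using mul_mem 1 (hM ▸ Submodule.mem_top) i hi

theorem exists_mem_notMem_of_span_eq_top (hI : I ≠ ⊤) {M : Submodule A B}
    (hM : Ideal.span (M : Set B) = ⊤) : ∃ x ∈ M, x ∉ I := by
  by_contra! h
  exact hI (top_le_iff.1 (hM ▸ Ideal.span_le.2 h))

theorem exists_residueLine_eq_of_mul_eq_one (hI : (I : Set B) ⊆ A) [I.IsPrime]
    (hmax : (I.comap (algebraMap A B)).IsMaximal) {M N : Submodule A B} (hMN : M * N = 1)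
    (hM : Ideal.span (M : Set B) = ⊤) (hN : Ideal.span (N : Set B) = ⊤) :
    ∃ u : (B ⧸ I)ˣ, residueLine A I u = M := by
  have mem_A {x y : B} (hx : x ∈ M) (hy : y ∈ N) : x * y ∈ A := by
    obtain ⟨a, ha⟩ := Submodule.mem_one.1 (hMN ▸ Submodule.mul_mem_mul hx hy)
    exact ha ▸ a.2
  obtain ⟨x, hxM, hxI⟩ := exists_mem_notMem_of_span_eq_top ‹I.IsPrime›.ne_top hM
  obtain ⟨y, hyN, hyI⟩ := exists_mem_notMem_of_span_eq_top ‹I.IsPrime›.ne_top hN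
  -- `A ⧸ (I ∩ A)` is a field, so the nonzero residue of `x * y ∈ A` has an inverse there
  obtain ⟨w, i, hi, hwi⟩ := hmax.exists_inv (x := ⟨x * y, mem_A hxM hyN⟩)
    (‹I.IsPrime›.mul_notMem hxI hyI)
  have hxyw' : x * (y * w) = 1 - i := by
    rw [← A.coe_one, ← hwi]
    push_cast
    ring
  have hxyw : Ideal.Quotient.mk I x * Ideal.Quotient.mk I (y * w) = 1 := by
    rw [← map_mul, hxyw', map_sub, map_one, Ideal.Quotient.eq_zero_iff_mem.2 (show (i : B) ∈ I from hi),
      sub_zero]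
  refine ⟨Units.mkOfMulEqOne _ _ hxyw, le_antisymm (fun z hz => ?_) fun z hz => ?_⟩
  · obtain ⟨a, ha, haz⟩ := mem_residueLine.1 hz
    rw [show z = a * x + (z - a * x) by ring]
    refine add_mem (M.smul_mem ⟨a, ha⟩ hxM) (restrictScalars_le_of_span_eq_top hI hM ?_)
    exact Ideal.Quotient.eq.1 (by simpa [mul_comm] using haz.symm)
  · refine mem_residueLine.2 ⟨z * y * w, A.mul_mem (mem_A hz hyN) w.2, ?_⟩
    calc Ideal.Quotient.mk I (z * y * w) * Ideal.Quotient.mk I x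
        = Ideal.Quotient.mk I z * (Ideal.Quotient.mk I x * Ideal.Quotient.mk I (y * w)) := by
          simp only [map_mul]; ring
      _ = Ideal.Quotient.mk I z := by rw [hxyw, mul_one]

end ResidueLine

section FractionField

variable {B K : Type*} [CommRing B] [Field K] [Algebra B K] [IsFractionRing B K] (A : Subring B)

theorem exists_map_eq_of_span_eq_one {V : Submodule A K}
    (hV : Submodule.span B (V : Set K) = 1) :
    ∃ M : Submodule A B,
      M.map (IsScalarTower.toAlgHom A B K).toLinearMap = V ∧ Ideal.span (M : Set B) = ⊤ := by
  have hVB : V ≤ LinearMap.range (IsScalarTower.toAlgHom A B K).toLinearMap := fun v hv =>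
    Submodule.mem_one.1 (hV ▸ Submodule.subset_span hv)
  set M := V.comap (IsScalarTower.toAlgHom A B K).toLinearMap
  have hM : M.map (IsScalarTower.toAlgHom A B K).toLinearMap = V :=
    Submodule.map_comap_eq_of_le hVB
  refine ⟨M, hM, IsFractionRing.coeSubmodule_injective B K ?_⟩
  rw [IsLocalization.coeSubmodule_span, IsLocalization.coeSubmodule_top, ← hV, ← hM,
    Submodule.map_coe]
  rfl

variable [IsDomain B]

theorem isFractionRing_of_mul_mem {d : B} (hd : d ≠ 0) (hdA : ∀ b, d * b ∈ A) :
    IsFractionRing A K := by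
  have inj : Function.Injective (algebraMap A K) :=
    (IsFractionRing.injective B K).comp Subtype.val_injective
  refine ⟨fun y => IsUnit.mk0 _ ((map_ne_zero_iff _ inj).2 (nonZeroDivisors.ne_zero y.2)),
    fun z => ?_, fun h => ⟨1, by rw [inj h]⟩⟩
  obtain ⟨a, b, hb, rfl⟩ := IsFractionRing.div_surjective (A := B) z
  have hdb : d * b ≠ 0 := mul_ne_zero hd (nonZeroDivisors.ne_zero hb)
  refine ⟨(⟨d * a, hdA a⟩, ⟨⟨d * b, hdA b⟩, mem_nonZeroDivisors_of_ne_zero ?_⟩), ?_⟩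
  · exact fun h => hdb (congrArg Subtype.val h)
  · show algebraMap B K a / algebraMap B K b * algebraMap B K (d * b) = algebraMap B K (d * a)
    have : algebraMap B K b ≠ 0 := IsFractionRing.to_map_ne_zero_of_mem_nonZeroDivisors hb
    rw [map_mul, map_mul]
    field_simp

variable [IsFractionRing A K]

theorem IsLocalization.map_subring_eq_id :
    IsLocalization.map K (algebraMap A B)
      (nonZeroDivisors_le_comap_nonZeroDivisors_of_injective _
        (FaithfulSMul.algebraMap_injective A B)) = RingHom.id K :=
  IsLocalization.ringHom_ext A⁰ (by ext; simp [← IsScalarTower.algebraMap_apply])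

namespace FractionalIdeal

theorem coe_extendedHom_eq_span_of_subring (J : FractionalIdeal A⁰ K) :
    (extendedHom K B J : Submodule B K) = Submodule.span B (J : Set K) := by
  rw [extendedHom'_apply, coe_extended_eq_span, IsLocalization.map_subring_eq_id]
  simp

theorem extendedHom_spanSingleton_of_subring (x : K) :
    extendedHom K B (spanSingleton A⁰ x) = spanSingleton B⁰ x := by
  rw [extendedHom_spanSingleton, IsFractionRing.map, IsLocalization.map_subring_eq_id,
    RingHom.id_apply]

end FractionalIdeal

open FractionalIdeal

theorem exists_classGroup_mk_eq_and_extendedHom_eq_one [Subsingleton (ClassGroup B)]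
    (J : (FractionalIdeal A⁰ K)ˣ) :
    ∃ J' : (FractionalIdeal A⁰ K)ˣ,
      ClassGroup.mk K J' = ClassGroup.mk K J ∧ extendedHom K B (J' : FractionalIdeal A⁰ K) = 1 := by
  obtain ⟨γ, hγ⟩ := (ClassGroup.isPrincipal_coeSubmodule_of_isUnit _
    (J.isUnit.map (extendedHom K B))).principal
  have hJγ : extendedHom K B (J : FractionalIdeal A⁰ K) = spanSingleton B⁰ γ := by
    rw [← coeToSubmodule_inj, hγ, coe_spanSingleton]
  have hγ0 : γ ≠ 0 := by
    rintro rfl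
    exact J.ne_zero ((extendedHom_eq_zero_iff K B).1 (by rw [hJγ, spanSingleton_zero]))
  set g := Units.mk0 γ hγ0
  have hg : ClassGroup.mk K (toPrincipalIdeal A K g) = 1 :=
    ClassGroup.mk_eq_one_iff.2 ⟨⟨γ, by simp [g]⟩⟩
  refine ⟨J * (toPrincipalIdeal A K g)⁻¹, by rw [map_mul, map_inv, hg, inv_one, mul_one], ?_⟩
  rw [Units.val_mul, map_mul, hJγ, ← map_inv, coe_toPrincipalIdeal, Units.val_inv_eq_inv_val,
    Units.val_mk0, extendedHom_spanSingleton_of_subring, spanSingleton_mul_spanSingleton,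
    mul_inv_cancel₀ hγ0, spanSingleton_one]

theorem exists_residueLine_map_eq (I : Ideal B) (hI : (I : Set B) ⊆ A) [I.IsPrime]
    (hmax : (I.comap (algebraMap A B)).IsMaximal) (J : (FractionalIdeal A⁰ K)ˣ)
    (hJ : extendedHom K B (J : FractionalIdeal A⁰ K) = 1) :
    ∃ u : (B ⧸ I)ˣ,
      (residueLine A I u).map (IsScalarTower.toAlgHom A B K).toLinearMap = J := by
  have span_eq_one {L : (FractionalIdeal A⁰ K)ˣ}
      (hL : extendedHom K B (L : FractionalIdeal A⁰ K) = 1) :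
      Submodule.span B (L : Set K) = 1 := by
    rw [← coe_extendedHom_eq_span_of_subring, hL, coe_one]
  have hJinv : extendedHom K B (↑J⁻¹ : FractionalIdeal A⁰ K) = 1 := by
    simpa [hJ] using (map_mul (extendedHom K B) (J : FractionalIdeal A⁰ K) ↑J⁻¹).symm
  obtain ⟨M, hM, hMspan⟩ := exists_map_eq_of_span_eq_one A (span_eq_one hJ)
  obtain ⟨N, hN, hNspan⟩ := exists_map_eq_of_span_eq_one A (span_eq_one hJinv)
  have hMN : M * N = 1 := by
    refine Submodule.map_injective_of_injective (f := (IsScalarTower.toAlgHom A B K).toLinearMap)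
      (IsFractionRing.injective B K) ?_
    rw [Submodule.map_mul, hM, hN, ← coe_mul, Units.mul_inv, coe_one, Submodule.map_one]
  obtain ⟨u, hu⟩ := exists_residueLine_eq_of_mul_eq_one hI hmax hMN hMspan hNspan
  exact ⟨u, hu ▸ hM⟩

variable (K) in
/-- `u ↦ [A x + I]` for a lift `x` of `u`. -/
noncomputable def residueUnitsToClassGroup (I : Ideal B) (hI : (I : Set B) ⊆ A) :
    (B ⧸ I)ˣ →* ClassGroup A :=
  (ClassGroup.mk K).comp <| (unitsMulEquivSubmodule (S := A⁰) (P := K)).symm.toMonoidHom.comp <|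
    (Units.map (Submodule.mapHom (IsScalarTower.toAlgHom A B K)).toMonoidHom).comp
      (residueLineHom hI)

theorem residueUnitsToClassGroup_surjective [Subsingleton (ClassGroup B)] (I : Ideal B)
    (hI : (I : Set B) ⊆ A) [I.IsPrime] (hmax : (I.comap (algebraMap A B)).IsMaximal) :
    Function.Surjective (residueUnitsToClassGroup K A I hI) := by
  refine ClassGroup.induction (K := K) fun J => ?_
  obtain ⟨J', hJ'J, hJ'⟩ := exists_classGroup_mk_eq_and_extendedHom_eq_one A J
  obtain ⟨u, hu⟩ := exists_residueLine_map_eq A I hI hmax J' hJ'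
  exact ⟨u, hJ'J ▸ congrArg (ClassGroup.mk K) (Units.ext (coeToSubmodule_injective hu))⟩

end FractionField

/-- If the conductor of the order `R` is a prime ideal of `𝓞 K` and the class group of
`𝓞 K` is trivial, then `Cl(R)` is cyclic. -/
theorem stmt_14 {K : Type*} [Field K] [NumberField K] (R : Subring (𝓞 K))
    (hR : Finite ((𝓞 K) ⧸ R.toAddSubgroup))
    (hP : (conductorIdeal R).IsPrime)
    (htriv : ∀ c : ClassGroup (𝓞 K), c = 1) :
    IsCyclic (ClassGroup R) := by
  have hIR : (conductorIdeal R : Set (𝓞 K)) ⊆ R := fun x hx => by simpa using hx 1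
  have hn : (R.toAddSubgroup.index : 𝓞 K) ≠ 0 :=
    Nat.cast_ne_zero.2 (AddSubgroup.index_ne_zero_of_finite (H := R.toAddSubgroup))
  have hnR (y : 𝓞 K) : (R.toAddSubgroup.index : 𝓞 K) * y ∈ R := by
    simpa [nsmul_eq_mul] using AddSubgroup.nsmul_index_mem R.toAddSubgroup y
  have hI0 : conductorIdeal R ≠ ⊥ := Submodule.ne_bot_iff _ |>.2 ⟨_, hnR, hn⟩
  have : IsFractionRing R K := isFractionRing_of_mul_mem R hn hnR
  have : (conductorIdeal R).IsMaximal := hP.isMaximal hI0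
  have : Finite (𝓞 K ⧸ conductorIdeal R) := Ideal.finiteQuotientOfFreeOfNeBot _ hI0
  have : Algebra.IsIntegral R (𝓞 K) := Algebra.IsIntegral.tower_top ℤ
  have : Subsingleton (ClassGroup (𝓞 K)) := ⟨fun a b => (htriv a).trans (htriv b).symm⟩
  exact isCyclic_of_surjective _ (residueUnitsToClassGroup_surjective (K := K) R _ hIR
    (Ideal.isMaximal_comap_of_isIntegral_of_isMaximal _))
end
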